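/- Let θ be an abelian group and α : θ → ℤ/2ℤ a surjective group homomorphism. Then the short exact sequence 0 → ker α → θ → ℤ/2ℤ → 0 splits (i.e., there exists a group homomorphism s : ℤ/2ℤ → θ with α ∘ s = id) if and only if every group homomorphism f : ker α → ℤ/2ℤ extends to a group homomorphism g : θ → ℤ/2ℤ (meaning g(v) = f(v) for all v ∈ ker α). -/

import Mathlib

/-!
Pick `t` with `α t = 1`; then `2 • t ∈ ker α`. If `2 • t = 2 • u` with `u ∈ ker α`, then `t - u`
has order two and maps to `1`, giving a section. Otherwise `2 • t` is nonzero in the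
`𝔽₂`-vector space `ker α / 2 ker α`, so some character `f : ker α → ℤ/2` is nonzero on it, while
every `g : θ → ℤ/2` vanishes on `2 • t`; hence `f` does not extend. Conversely a section `s`
gives the retraction `x ↦ x - s (α x)` onto `ker α`, through which any `f` extends.
-/

theorem AddMonoidHom.exists_ne_zero_zmod_of_forall_nsmul_ne {A : Type*} [AddCommGroup A]
    {p : ℕ} [Fact p.Prime] {a : A} (ha : ∀ b : A, p • b ≠ a) :
    ∃ f : A →+ ZMod p, f a ≠ 0 := by
  have hmk : ModN.mkQ p a ≠ 0 := by
    rintro h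
    obtain ⟨b, hb⟩ := (Submodule.Quotient.mk_eq_zero _).mp h
    exact ha b (by simpa [natCast_zsmul] using hb)
  obtain ⟨φ, hφ⟩ := Module.Projective.exists_dual_ne_zero (ZMod p) hmk
  exact ⟨φ.toAddMonoidHom.comp (ModN.mkQ p), hφ⟩

theorem AddMonoidHom.exists_comp_eq_id_of_nsmul_eq_zero {G : Type*} [AddCommGroup G] {n : ℕ}
    (α : G →+ ZMod n) {x : G} (hαx : α x = 1) (hx : n • x = 0) :
    ∃ s : ZMod n →+ G, α.comp s = AddMonoidHom.id (ZMod n) := by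
  refine ⟨ZMod.lift n ⟨zmultiplesHom G x, by simpa [natCast_zsmul] using hx⟩, ?_⟩
  ext y
  obtain ⟨m, rfl⟩ := ZMod.intCast_surjective y
  simp [ZMod.lift_coe, hαx]

theorem AddMonoidHom.exists_extend_of_comp_eq_id {G H M : Type*} [AddCommGroup G] [AddGroup H]
    [AddMonoid M] (α : G →+ H) (s : H →+ G) (hs : α.comp s = AddMonoidHom.id H)
    (f : α.ker →+ M) : ∃ g : G →+ M, ∀ v : α.ker, g v = f v := by
  have hαs : ∀ y, α (s y) = y := DFunLike.congr_fun hs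
  let r : G →+ α.ker :=
    (AddMonoidHom.id G - s.comp α).codRestrict α.ker fun x => by simp [hαs]
  refine ⟨f.comp r, fun v => congrArg f (Subtype.ext ?_)⟩
  simp [r, α.mem_ker.mp v.2]

theorem AddMonoidHom.map_nsmul_char_eq_zero {G : Type*} [AddCommGroup G] {n : ℕ}
    (g : G →+ ZMod n) (x : G) : g (n • x) = 0 := by
  rw [map_nsmul, nsmul_eq_mul, ZMod.natCast_self, zero_mul]

/-- The sequence 0 → ker α → θ → ℤ/2ℤ → 0 splits iff every group homomorphism
f : ker α → ℤ/2ℤ extends to θ. -/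
theorem splits_iff_every_hom_extends
    {θ : Type*} [AddCommGroup θ] (α : θ →+ ZMod 2)
    (hα : Function.Surjective α) :
    (∃ s : ZMod 2 →+ θ, α.comp s = AddMonoidHom.id (ZMod 2)) ↔
      (∀ f : α.ker →+ ZMod 2, ∃ g : θ →+ ZMod 2, ∀ v : α.ker, g (v : θ) = f v) := by
  refine ⟨fun ⟨s, hs⟩ => α.exists_extend_of_comp_eq_id s hs, fun hext => ?_⟩
  obtain ⟨t, ht⟩ := hα 1
  let k : α.ker := ⟨2 • t, by simpa using α.map_nsmul_char_eq_zero t⟩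
  by_cases hk : ∃ u : α.ker, 2 • u = k
  · obtain ⟨u, hu⟩ := hk
    have h2u : 2 • (u : θ) = 2 • t := congrArg Subtype.val hu
    refine α.exists_comp_eq_id_of_nsmul_eq_zero (x := t - u) ?_ ?_
    · simp [ht, α.mem_ker.mp u.2]
    · rw [nsmul_sub, h2u, sub_self]
  · push Not at hk
    obtain ⟨f, hf⟩ := AddMonoidHom.exists_ne_zero_zmod_of_forall_nsmul_ne hk
    obtain ⟨g, hg⟩ := hext f
    exact absurd ((hg k).symm.trans (g.map_nsmul_char_eq_zero t)) hf
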